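/- arXiv:2407.17582 — 6 statements merged into one kernel-verified Lean document; each statement's English description precedes it below -/
import Mathlib

section
/- The adder channel W⁺_{t,ℓ} defined by Y = X₁ + ⋯ + X_t + S with binary inputs X_j ∈ {0,1}, state S ∈ {0,1,…,ℓ} (ℓ ≥ 1), outputs in {0,…,t+ℓ}, and no-adversary state s₀ = 0, is not m-overwritable for any m ∈ [t]: there is no conditional distribution P(s | x₁′,…,x_m′) such that for all inputs x₁,…,x_t, x₁′,…,x_m′ and all outputs y, ∑_s P(s | x₁′,…,x_m′) · W(y | x₁,…,x_t, s) = W(y | x₁′,…,x_m′, x_{m+1},…,x_t, s₀). -/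
open Finset

noncomputable def Wplus (t : ℕ) (y : ℕ) (x : Fin t → ℕ) (s : ℕ) : ℝ :=
  if y = (∑ i, x i) + s then 1 else 0

/-- `W⁺_{t,ℓ}` is not `m`-overwritable for any `m ∈ [t]`: there is no
conditional distribution `P(s | x₁',…,x_m')` on states `{0,…,ℓ}` such that for all binary
inputs `x`, `x'` and all outputs `y`,
`∑_s P(s|x') W(y|x,s) = W(y | x' followed by x_{m+1..t}, 0)`. -/
theorem stmt_2 (t ℓ m : ℕ) (ht : 2 ≤ t) (hℓ : 1 ≤ ℓ) (hm1 : 1 ≤ m) (hmt : m ≤ t) :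
    ¬ ∃ P : (Fin m → ℕ) → ℕ → ℝ,
      (∀ x' s, 0 ≤ P x' s) ∧
      (∀ x' : Fin m → ℕ, ∑ s ∈ Finset.range (ℓ + 1), P x' s = 1) ∧
      (∀ x : Fin t → ℕ, (∀ i, x i ≤ 1) →
        ∀ x' : Fin m → ℕ, (∀ i, x' i ≤ 1) → ∀ y : ℕ,
          ∑ s ∈ Finset.range (ℓ + 1), P x' s * Wplus t y x s =
            Wplus t y (fun i => if h : (i : ℕ) < m then x' ⟨i, h⟩ else x i) 0) := by
  rintro ⟨P, hP0, hP1, h3⟩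
  have hA := h3 (fun _ => 0) (fun i => by norm_num) (fun _ => 0) (fun i => by norm_num) 0
  have hB := h3 (fun _ => 1) (fun i => le_refl 1) (fun _ => 0) (fun i => by norm_num) t
  have hsumB : (∑ i : Fin t, (if (i : ℕ) < m then (0:ℕ) else 1)) = t - m := by
    rw [Fin.sum_univ_eq_sum_range (fun i => if i < m then (0:ℕ) else 1)]
    rw [Finset.sum_ite, Finset.sum_const, Finset.sum_const]
    have h2 : (Finset.range t).filter (fun i => m ≤ i) = Finset.Ico m t := by
      ext i; simp [and_comm]
    simp [Nat.not_lt, h2]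
  simp only [Wplus, hsumB, dite_eq_ite, ite_self, eq_self_iff_true, if_true, Finset.sum_const_zero, zero_add, add_zero,
    left_eq_add, Fin.sum_const, smul_eq_mul, mul_one] at hA hB
  have hne : ¬ t = t - m := by omega
  rw [if_neg hne] at hB
  have hA' : P (fun _ => 0) 0 = 1 := by
    rw [← hA]
    rw [Finset.sum_eq_single 0]
    · simp
    · intro b _ hb; simp [Ne.symm hb]
    · intro h; simp at h
  have hB' : P (fun _ => 0) 0 = 0 := by
    rw [← hB]
    rw [Finset.sum_eq_single 0]
    · simp
    · intro b _ hb; simp [hb]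
    · intro h; simp at h
  rw [hA'] at hB'
  norm_num at hB'
end

section
/- For the adder channel W⁺_{t,ℓ} with ℓ ≤ t and q ≤ ℓ, the channel is q-user symmetrizable: the deterministic distribution P(s | x₁,…,x_q) = 1 iff s = ∑_{i=1}^q x_i satisfies, for all x₁,…,x_t, x₁′,…,x_q′, y, the identity ∑_s P(s | x₁′,…,x_q′) W(y | x₁,…,x_t, s) = ∑_s P(s | x₁,…,x_q) W(y | x₁′,…,x_q′, x_{q+1},…,x_t, s). -/
open Finset

lemma sum_le_card' {n : ℕ} (z : Fin n → ℕ) (hz : ∀ i, z i ≤ 1) : ∑ i, z i ≤ n := by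
  calc ∑ i, z i ≤ ∑ _i : Fin n, 1 := Finset.sum_le_sum (fun i _ => hz i)
  _ = n := by simp

lemma key (t q : ℕ) (hqt : q ≤ t) (x : Fin t → ℕ) (x' : Fin q → ℕ) :
    (∑ i : Fin t, (if h : (i:ℕ) < q then x' ⟨i,h⟩ else x i)) + ∑ i, x (Fin.castLE hqt i)
    = (∑ i, x i) + ∑ i, x' i := by
  have h1 : ∀ (g : Fin t → ℕ),
      ∑ i, g i = ∑ i ∈ univ.filter (fun i : Fin t => (i:ℕ) < q), g i
        + ∑ i ∈ univ.filter (fun i : Fin t => ¬ (i:ℕ) < q), g i :=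
    fun g => (Finset.sum_filter_add_sum_filter_not _ _ _).symm
  have hb : ∀ (g : Fin t → ℕ),
      ∑ i ∈ univ.filter (fun i : Fin t => (i:ℕ) < q), g i
        = ∑ j : Fin q, g (Fin.castLE hqt j) := by
    intro g
    refine (Finset.sum_bij' (fun (j : Fin q) _ => (Fin.castLE hqt j))
      (fun i hi => ⟨(i:ℕ), (Finset.mem_filter.mp hi).2⟩) ?_ ?_ ?_ ?_ ?_).symm <;>
      intros <;> simp_all [Fin.ext_iff]
  rw [h1 (fun i => if h : (i:ℕ) < q then x' ⟨i,h⟩ else x i), h1 x, hb, hb]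
  have h2 : ∑ i ∈ univ.filter (fun i : Fin t => ¬ (i:ℕ) < q),
      (if h : (i:ℕ) < q then x' ⟨i,h⟩ else x i) =
      ∑ i ∈ univ.filter (fun i : Fin t => ¬ (i:ℕ) < q), x i := by
    refine Finset.sum_congr rfl fun i hi => ?_
    rw [dif_neg (Finset.mem_filter.mp hi).2]
  have h3 : ∀ j : Fin q,
      (if h : ((Fin.castLE hqt j : Fin t) : ℕ) < q then x' ⟨_, h⟩ else x (Fin.castLE hqt j))
        = x' j := by
    intro j
    rw [dif_pos (by simp)]
    rfl
  simp only [h2, Finset.sum_congr rfl (fun j _ => h3 j)]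
  ring

/-- For `q ≤ ℓ ≤ t`, the channel `W⁺_{t,ℓ}` is `q`-user symmetrizable via the
deterministic distribution `P(s | x₁,…,x_q) = 1` iff `s = ∑_{i<q} x_i`: for all binary
inputs `x : Fin t → ℕ`, `x' : Fin q → ℕ` and all outputs `y`,
`∑_s P(s|x') W(y|x,s) = ∑_s P(s|x₁..q) W(y | x' followed by x_{q+1..t}, s)`. -/
theorem stmt_3 (t ℓ q : ℕ) (ht : 2 ≤ t) (hℓ : 1 ≤ ℓ) (hℓt : ℓ ≤ t) (hq : q ≤ ℓ)
    (P : (Fin q → ℕ) → ℕ → ℝ)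
    (hP : ∀ (z : Fin q → ℕ) (s : ℕ), P z s = if s = ∑ i, z i then 1 else 0)
    (x : Fin t → ℕ) (hx : ∀ i, x i ≤ 1)
    (x' : Fin q → ℕ) (hx' : ∀ i, x' i ≤ 1) (y : ℕ) :
    ∑ s ∈ Finset.range (ℓ + 1), P x' s * Wplus t y x s =
      ∑ s ∈ Finset.range (ℓ + 1),
        P (fun i => x (Fin.castLE (le_trans hq hℓt) i)) s *
          Wplus t y (fun i => if h : (i : ℕ) < q then x' ⟨i, h⟩ else x i) s := by
  have ha : ∑ i, x' i ≤ ℓ := le_trans (sum_le_card' x' hx') hq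
  have hb : ∑ i, x (Fin.castLE (le_trans hq hℓt) i) ≤ ℓ :=
    le_trans (sum_le_card' _ (fun i => hx _)) hq
  simp only [hP, ite_mul, one_mul, zero_mul, Finset.sum_ite_eq', Finset.mem_range,
    if_pos (Nat.lt_succ_of_le ha), if_pos (Nat.lt_succ_of_le hb)]
  unfold Wplus
  rw [key t q (le_trans hq hℓt) x x']
end

section
/- For the adder channel W⁺_{t,ℓ}, if ℓ + 1 ≤ q ≤ t, then the channel is not q-user symmetrizable: there is no conditional distribution P(s | x₁,…,x_q) with states s ∈ {0,…,ℓ} satisfying the q-user symmetrizability identity for all inputs and outputs. -/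
open Finset

/-- For `ℓ + 1 ≤ q ≤ t`, the channel `W⁺_{t,ℓ}` is not `q`-user
symmetrizable: no conditional distribution `P(s | x₁,…,x_q)` on states `{0,…,ℓ}`
satisfies the symmetrizability identity for all binary inputs and all outputs. -/
theorem stmt_4 (t ℓ q : ℕ) (ht : 2 ≤ t) (hℓ : 1 ≤ ℓ) (hq1 : ℓ + 1 ≤ q) (hqt : q ≤ t) :
    ¬ ∃ P : (Fin q → ℕ) → ℕ → ℝ,
      (∀ z s, 0 ≤ P z s) ∧
      (∀ z : Fin q → ℕ, ∑ s ∈ Finset.range (ℓ + 1), P z s = 1) ∧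
      (∀ x : Fin t → ℕ, (∀ i, x i ≤ 1) →
        ∀ x' : Fin q → ℕ, (∀ i, x' i ≤ 1) → ∀ y : ℕ,
          ∑ s ∈ Finset.range (ℓ + 1), P x' s * Wplus t y x s =
            ∑ s ∈ Finset.range (ℓ + 1),
              P (fun i => x (Fin.castLE hqt i)) s *
                Wplus t y (fun i => if h : (i : ℕ) < q then x' ⟨i, h⟩ else x i) s) := by
  rintro ⟨P, hpos, hsum, hsym⟩
  -- the mixed input is all-ones on the first q coordinates, zero elsewhere
  have hsumq : (∑ i : Fin t,
      (if h : ((i : ℕ)) < q then (fun _ : Fin q => 1) ⟨i, h⟩ else (fun _ : Fin t => 0) i)) = q := by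
    have h1 : (∑ i : Fin t,
        (if h : ((i : ℕ)) < q then (fun _ : Fin q => 1) ⟨i, h⟩ else (fun _ : Fin t => 0) i))
        = ∑ i ∈ Finset.range t, (if i < q then 1 else 0) := by
      rw [← Fin.sum_univ_eq_sum_range (fun i => if i < q then 1 else 0) t]
      refine Finset.sum_congr rfl fun i _ => ?_
      by_cases h : (i : ℕ) < q <;> simp [h]
    rw [h1, ← Finset.sum_subset (Finset.range_subset_range.mpr hqt)
        (fun x _ hx => by simp only [Finset.mem_range, not_lt] at hx; simp [Nat.not_lt.mpr hx])]
    refine Eq.trans (Finset.sum_congr rfl fun x hx => if_pos (Finset.mem_range.mp hx)) ?_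
    simp
  have key : ∀ z ∈ Finset.range (ℓ + 1), P (fun _ => 0) z = 0 := by
    intro z hz
    rw [Finset.mem_range] at hz
    have h := hsym (fun _ => 0) (fun _ => Nat.zero_le 1) (fun _ => 1) (fun _ => le_refl 1) (z + q)
    have hL : ∑ s ∈ Finset.range (ℓ + 1),
        P (fun _ => 1) s * Wplus t (z + q) (fun _ => 0) s = 0 := by
      refine Finset.sum_eq_zero fun s hs => ?_
      rw [Finset.mem_range] at hs
      simp only [Wplus, Finset.sum_const_zero, Nat.zero_add]
      rw [if_neg (by omega)]
      ring
    have hR : ∑ s ∈ Finset.range (ℓ + 1),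
        P (fun i => (fun _ : Fin t => 0) (Fin.castLE hqt i)) s *
          Wplus t (z + q) (fun i => if h : ((i : ℕ)) < q then (fun _ : Fin q => 1) ⟨i, h⟩
            else (fun _ : Fin t => 0) i) s
        = P (fun _ => 0) z := by
      have h2 : ∀ s ∈ Finset.range (ℓ + 1),
          P (fun i => (fun _ : Fin t => 0) (Fin.castLE hqt i)) s *
            Wplus t (z + q) (fun i => if h : ((i : ℕ)) < q then (fun _ : Fin q => 1) ⟨i, h⟩
              else (fun _ : Fin t => 0) i) s
          = if s = z then P (fun _ => 0) s else 0 := by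
        intro s _
        unfold Wplus
        rw [hsumq]
        rcases eq_or_ne s z with rfl | hne
        · simp [Nat.add_comm]
        · have : z + q ≠ q + s := by omega
          simp [this, hne]
      rw [Finset.sum_congr rfl h2, Finset.sum_ite_eq' (Finset.range (ℓ + 1)) z]
      simp [hz]
    rw [hL, hR] at h
    exact h.symm
  have h0 := hsum (fun _ => 0)
  rw [Finset.sum_eq_zero key] at h0
  norm_num at h0
end

section
/- Let (C₁, C₂) be codebooks in {0,1}ⁿ for the two-user channel W⁺_{2,1} satisfying the zero-error 0.5-partial-correction conditions (conditions (1)–(3) of the characterization below with γ = 0.5, so ⌈γt⌉ = 1), with |C₁|, |C₂| > 1. Then C₁ ∩ C₂ = ∅. -/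
/-- No-adversary outputs for a two-user codebook pair. -/
def A0 (n : ℕ) (C1 C2 : Set (Fin n → ℕ)) : Set (Fin n → ℕ) :=
  {u | ∃ x1 ∈ C1, ∃ x2 ∈ C2, u = x1 + x2}

/-- Adversarial outputs over `W⁺_{2,1}`: nonzero binary state vectors. -/
def A1 (n : ℕ) (C1 C2 : Set (Fin n → ℕ)) : Set (Fin n → ℕ) :=
  {w | ∃ x1 ∈ C1, ∃ x2 ∈ C2, ∃ s : Fin n → ℕ,
    (∀ i, s i ≤ 1) ∧ s ≠ 0 ∧ w = s + x1 + x2}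

/-- Condition (1): `A₀ ∩ A₁ = ∅`. -/
def Cond1 (n : ℕ) (C1 C2 : Set (Fin n → ℕ)) : Prop := A0 n C1 C2 ∩ A1 n C1 C2 = ∅

/-- Condition (2): the elements of the multiset `A₀` are unique, i.e. the sum map is
injective on `C1 × C2`. -/
def Cond2 (n : ℕ) (C1 C2 : Set (Fin n → ℕ)) : Prop :=
  ∀ x1 ∈ C1, ∀ x1' ∈ C1, ∀ x2 ∈ C2, ∀ x2' ∈ C2,
    x1 + x2 = x1' + x2' → x1 = x1' ∧ x2 = x2'

/-- Condition (3) for `γ = 0.5`, `t = 2` (so `⌈γt⌉ = 1`): for every element of `A₁`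
there is a fixed user on which all adversarial representations of it agree. -/
def Cond3 (n : ℕ) (C1 C2 : Set (Fin n → ℕ)) : Prop :=
  ∀ w : Fin n → ℕ, ∃ j : Fin 2,
    ∀ x1 ∈ C1, ∀ x2 ∈ C2, ∀ x1' ∈ C1, ∀ x2' ∈ C2, ∀ s s' : Fin n → ℕ,
      (∀ i, s i ≤ 1) → s ≠ 0 → (∀ i, s' i ≤ 1) → s' ≠ 0 →
      w = s + x1 + x2 → w = s' + x1' + x2' →
      (j = 0 → x1 = x1') ∧ (j = 1 → x2 = x2')

/-- A zero-error `0.5` partially correcting codebook pair over `W⁺_{2,1}`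
with both codebooks of size `> 1` has disjoint codebooks. -/
theorem stmt_7 (n : ℕ) (C1 C2 : Set (Fin n → ℕ))
    (hbin1 : ∀ x ∈ C1, ∀ i, x i ≤ 1) (hbin2 : ∀ x ∈ C2, ∀ i, x i ≤ 1)
    (h1 : Cond1 n C1 C2) (h2 : Cond2 n C1 C2) (h3 : Cond3 n C1 C2)
    (hC1 : C1.Nontrivial) (hC2 : C2.Nontrivial) :
    C1 ∩ C2 = ∅ := by
  rw [Set.eq_empty_iff_forall_notMem]
  rintro x ⟨hx1, hx2⟩
  obtain ⟨a, ha1, hax⟩ := hC1.exists_ne x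
  obtain ⟨b, hb2, hbx⟩ := hC2.exists_ne x
  by_cases ha0 : a = 0
  · -- 0 ∈ C1, x ≠ 0; then x + b ∈ A0 ∩ A1
    have hxne : x ≠ 0 := fun h => hax (h ▸ ha0.symm ▸ rfl)
    have : (x + b) ∈ A0 n C1 C2 ∩ A1 n C1 C2 := by
      constructor
      · exact ⟨x, hx1, b, hb2, rfl⟩
      · exact ⟨a, ha1, b, hb2, x, hbin1 x hx1, hxne, by
          subst ha0; funext i; simp⟩
    rw [h1] at this
    exact this
  · by_cases hb0 : b = 0
    · have hxne : x ≠ 0 := fun h => hbx (h ▸ hb0.symm ▸ rfl)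
      have : (a + x) ∈ A0 n C1 C2 ∩ A1 n C1 C2 := by
        constructor
        · exact ⟨a, ha1, x, hx2, rfl⟩
        · exact ⟨a, ha1, b, hb2, x, hbin1 x hx1, hxne, by
            subst hb0; funext i; simp [Nat.add_comm]⟩
      rw [h1] at this
      exact this
    · obtain ⟨j, hj⟩ := h3 (a + x + b)
      have key := hj x hx1 b hb2 a ha1 x hx2 a b
        (hbin1 a ha1) ha0 (hbin2 b hb2) hb0
        rfl (by funext i; simp; ring)
      fin_cases j
      · exact hax (key.1 rfl).symm
      · exact hbx (key.2 rfl)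
end

section
/- Let (C₁, C₂) ⊆ {0,1}ⁿ be a 0.5 partially correcting codebook pair with zero error over W⁺_{2,1}, with |C₁|,|C₂| > 1. Then the disjoint union C₁ ⊔ C₂ contains at most two pairs of codewords related by support inclusion, and if there are two such related pairs {x₁ ≤ x₂} and {y₁ ≤ y₂}, then the smaller elements x₁, y₁ lie in different codebooks. -/
/-- Support inclusion: `supp x ⊆ supp y`. -/
def SuppLE (n : ℕ) (x y : Fin n → ℕ) : Prop := ∀ i, x i ≠ 0 → y i ≠ 0

lemma ptwise_le {n : ℕ} {x y : Fin n → ℕ} (hx : ∀ i, x i ≤ 1)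
    (h : SuppLE n x y) : ∀ i, x i ≤ y i := by
  intro i
  rcases Nat.eq_zero_or_pos (x i) with h0 | h0
  · omega
  · have := h i (by omega)
    have := hx i
    omega

lemma sub_nonzero {n : ℕ} {x y : Fin n → ℕ} (hle : ∀ i, x i ≤ y i)
    (hne : x ≠ y) : (fun i => y i - x i) ≠ (0 : Fin n → ℕ) := by
  intro hs
  apply hne
  funext i
  have : (fun i => y i - x i) i = (0 : Fin n → ℕ) i := by rw [hs]
  simp only [Pi.zero_apply] at this
  have := hle i
  omega

/-- `C1` is an antichain under support inclusion. -/
lemma antichain1 {n : ℕ} {C1 C2 : Set (Fin n → ℕ)}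
    (hbin1 : ∀ x ∈ C1, ∀ i, x i ≤ 1)
    (h1 : Cond1 n C1 C2) (hC2 : C2.Nonempty)
    {x y : Fin n → ℕ} (hx : x ∈ C1) (hy : y ∈ C1) (hxy : x ≠ y)
    (hs : SuppLE n x y) : False := by
  obtain ⟨z, hz⟩ := hC2
  have hle := ptwise_le (hbin1 x hx) hs
  have hmem : y + z ∈ A0 n C1 C2 ∩ A1 n C1 C2 := by
    constructor
    · exact ⟨y, hy, z, hz, rfl⟩
    · refine ⟨x, hx, z, hz, fun i => y i - x i, fun i => ?_, sub_nonzero hle hxy, ?_⟩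
      · show y i - x i ≤ 1; have := hbin1 y hy i; omega
      · funext i
        simp only [Pi.add_apply]
        have := hle i
        omega
  rw [h1] at hmem
  exact hmem

/-- `C2` is an antichain under support inclusion. -/
lemma antichain2 {n : ℕ} {C1 C2 : Set (Fin n → ℕ)}
    (hbin2 : ∀ x ∈ C2, ∀ i, x i ≤ 1)
    (h1 : Cond1 n C1 C2) (hC1 : C1.Nonempty)
    {x y : Fin n → ℕ} (hx : x ∈ C2) (hy : y ∈ C2) (hxy : x ≠ y)
    (hs : SuppLE n x y) : False := by
  obtain ⟨z, hz⟩ := hC1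
  have hle := ptwise_le (hbin2 x hx) hs
  have hmem : z + y ∈ A0 n C1 C2 ∩ A1 n C1 C2 := by
    constructor
    · exact ⟨z, hz, y, hy, rfl⟩
    · refine ⟨z, hz, x, hx, fun i => y i - x i, fun i => ?_, sub_nonzero hle hxy, ?_⟩
      · show y i - x i ≤ 1; have := hbin2 y hy i; omega
      · funext i
        simp only [Pi.add_apply]
        have := hle i
        omega
  rw [h1] at hmem
  exact hmem

/-- Two related pairs cannot both have their smaller element in `C1`. -/
lemma smaller_ne_C1 {n : ℕ} {C1 C2 : Set (Fin n → ℕ)}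
    (hbin2 : ∀ x ∈ C2, ∀ i, x i ≤ 1) (h3 : Cond3 n C1 C2)
    {x1 x2 y1 y2 : Fin n → ℕ}
    (hx1 : x1 ∈ C1) (hx2 : x2 ∈ C2) (hy1 : y1 ∈ C1) (hy2 : y2 ∈ C2)
    (hx12 : x1 ≠ x2) (hy12 : y1 ≠ y2) (hxy1 : x1 ≠ y1) (hxy2 : x2 ≠ y2)
    (hlex : ∀ i, x1 i ≤ x2 i) (hley : ∀ i, y1 i ≤ y2 i) : False := by
  obtain ⟨j, hj⟩ := h3 (x2 + y2)
  have ha : ∀ i, (fun i => x2 i - x1 i) i ≤ 1 := by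
    intro i; show x2 i - x1 i ≤ 1; have := hbin2 x2 hx2 i; omega
  have hb : ∀ i, (fun i => y2 i - y1 i) i ≤ 1 := by
    intro i; show y2 i - y1 i ≤ 1; have := hbin2 y2 hy2 i; omega
  have hw1 : x2 + y2 = (fun i => x2 i - x1 i) + x1 + y2 := by
    funext i; simp only [Pi.add_apply]; have := hlex i; omega
  have hw2 : x2 + y2 = (fun i => y2 i - y1 i) + y1 + x2 := by
    funext i; simp only [Pi.add_apply]; have := hley i; omega
  have H := hj x1 hx1 y2 hy2 y1 hy1 x2 hx2 _ _ ha (sub_nonzero hlex hx12)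
    hb (sub_nonzero hley hy12) hw1 hw2
  have hj2 : j = 0 ∨ j = 1 := by omega
  rcases hj2 with rfl | rfl
  · exact hxy1 (H.1 rfl)
  · exact hxy2 (H.2 rfl).symm

/-- Two related pairs cannot both have their smaller element in `C2`. -/
lemma smaller_ne_C2 {n : ℕ} {C1 C2 : Set (Fin n → ℕ)}
    (hbin1 : ∀ x ∈ C1, ∀ i, x i ≤ 1) (h3 : Cond3 n C1 C2)
    {x1 x2 y1 y2 : Fin n → ℕ}
    (hx1 : x1 ∈ C2) (hx2 : x2 ∈ C1) (hy1 : y1 ∈ C2) (hy2 : y2 ∈ C1)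
    (hx12 : x1 ≠ x2) (hy12 : y1 ≠ y2) (hxy1 : x1 ≠ y1) (hxy2 : x2 ≠ y2)
    (hlex : ∀ i, x1 i ≤ x2 i) (hley : ∀ i, y1 i ≤ y2 i) : False := by
  obtain ⟨j, hj⟩ := h3 (x2 + y2)
  have ha : ∀ i, (fun i => x2 i - x1 i) i ≤ 1 := by
    intro i; show x2 i - x1 i ≤ 1; have := hbin1 x2 hx2 i; omega
  have hb : ∀ i, (fun i => y2 i - y1 i) i ≤ 1 := by
    intro i; show y2 i - y1 i ≤ 1; have := hbin1 y2 hy2 i; omega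
  have hw1 : x2 + y2 = (fun i => x2 i - x1 i) + y2 + x1 := by
    funext i; simp only [Pi.add_apply]; have := hlex i; omega
  have hw2 : x2 + y2 = (fun i => y2 i - y1 i) + x2 + y1 := by
    funext i; simp only [Pi.add_apply]; have := hley i; omega
  have H := hj y2 hy2 x1 hx1 x2 hx2 y1 hy1 _ _ ha (sub_nonzero hlex hx12)
    hb (sub_nonzero hley hy12) hw1 hw2
  have hj2 : j = 0 ∨ j = 1 := by omega
  rcases hj2 with rfl | rfl
  · exact hxy2 (H.1 rfl).symm
  · exact hxy1 (H.2 rfl)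

/-- For a zero-error `0.5` partially correcting pair over `W⁺_{2,1}` with
`|C1|, |C2| > 1`, the disjoint union `C1 ⊔ C2` has at most two pairs of codewords related
by support inclusion (three disjoint related pairs are impossible), and if there are two
related pairs then their smaller elements lie in different codebooks. -/
theorem stmt_8 (n : ℕ) (C1 C2 : Set (Fin n → ℕ))
    (hbin1 : ∀ x ∈ C1, ∀ i, x i ≤ 1) (hbin2 : ∀ x ∈ C2, ∀ i, x i ≤ 1)
    (h1 : Cond1 n C1 C2) (h2 : Cond2 n C1 C2) (h3 : Cond3 n C1 C2)
    (hC1 : C1.Nontrivial) (hC2 : C2.Nontrivial) :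
    (∀ x1 x2 y1 y2 z1 z2 : Fin n → ℕ,
      x1 ∈ C1 ∪ C2 → x2 ∈ C1 ∪ C2 → y1 ∈ C1 ∪ C2 → y2 ∈ C1 ∪ C2 →
      z1 ∈ C1 ∪ C2 → z2 ∈ C1 ∪ C2 →
      [x1, x2, y1, y2, z1, z2].Pairwise (· ≠ ·) →
      SuppLE n x1 x2 → SuppLE n y1 y2 → SuppLE n z1 z2 → False) ∧
    (∀ x1 x2 y1 y2 : Fin n → ℕ,
      x1 ∈ C1 ∪ C2 → x2 ∈ C1 ∪ C2 → y1 ∈ C1 ∪ C2 → y2 ∈ C1 ∪ C2 →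
      [x1, x2, y1, y2].Pairwise (· ≠ ·) →
      SuppLE n x1 x2 → SuppLE n y1 y2 →
      ¬(x1 ∈ C1 ∧ y1 ∈ C1) ∧ ¬(x1 ∈ C2 ∧ y1 ∈ C2)) := by
  have hne1 : C1.Nonempty := hC1.nonempty
  have hne2 : C2.Nonempty := hC2.nonempty
  -- the second conjunct, proved first
  have key : ∀ x1 x2 y1 y2 : Fin n → ℕ,
      x1 ∈ C1 ∪ C2 → x2 ∈ C1 ∪ C2 → y1 ∈ C1 ∪ C2 → y2 ∈ C1 ∪ C2 →
      x1 ≠ x2 → x1 ≠ y1 → y1 ≠ y2 → x2 ≠ y2 →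
      SuppLE n x1 x2 → SuppLE n y1 y2 →
      ¬(x1 ∈ C1 ∧ y1 ∈ C1) ∧ ¬(x1 ∈ C2 ∧ y1 ∈ C2) := by
    intro x1 x2 y1 y2 hx1 hx2 hy1 hy2 hx12 hxy1 hy12 hxy2 hsx hsy
    constructor
    · rintro ⟨hx1C, hy1C⟩
      have hx2C : x2 ∈ C2 := by
        rcases hx2 with h | h
        · exact absurd h (fun h => antichain1 hbin1 h1 hne2 hx1C h hx12 hsx)
        · exact h
      have hy2C : y2 ∈ C2 := by
        rcases hy2 with h | h
        · exact absurd h (fun h => antichain1 hbin1 h1 hne2 hy1C h hy12 hsy)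
        · exact h
      exact smaller_ne_C1 hbin2 h3 hx1C hx2C hy1C hy2C hx12 hy12 hxy1 hxy2
        (ptwise_le (hbin1 x1 hx1C) hsx) (ptwise_le (hbin1 y1 hy1C) hsy)
    · rintro ⟨hx1C, hy1C⟩
      have hx2C : x2 ∈ C1 := by
        rcases hx2 with h | h
        · exact h
        · exact absurd h (fun h => antichain2 hbin2 h1 hne1 hx1C h hx12 hsx)
      have hy2C : y2 ∈ C1 := by
        rcases hy2 with h | h
        · exact h
        · exact absurd h (fun h => antichain2 hbin2 h1 hne1 hy1C h hy12 hsy)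
      exact smaller_ne_C2 hbin1 h3 hx1C hx2C hy1C hy2C hx12 hy12 hxy1 hxy2
        (ptwise_le (hbin2 x1 hx1C) hsx) (ptwise_le (hbin2 y1 hy1C) hsy)
  constructor
  · intro x1 x2 y1 y2 z1 z2 hx1 hx2 hy1 hy2 hz1 hz2 hpw hsx hsy hsz
    simp only [List.pairwise_cons, List.mem_cons, List.mem_singleton,
      List.not_mem_nil, List.Pairwise.nil, ne_eq,
      List.mem_nil_iff, forall_eq_or_imp, forall_eq, and_true] at hpw
    obtain ⟨⟨h12, h13, h14, h15, h16⟩, ⟨h23, h24, h25, h26⟩, ⟨h34, h35, h36⟩,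
      ⟨h45, h46⟩, h56, -⟩ := hpw
    have Kxy := key x1 x2 y1 y2 hx1 hx2 hy1 hy2 h12 h13 h34 h24 hsx hsy
    have Kxz := key x1 x2 z1 z2 hx1 hx2 hz1 hz2 h12 h15 h56.1 h26.1 hsx hsz
    have Kyz := key y1 y2 z1 z2 hy1 hy2 hz1 hz2 h34 h35 h56.1 h46.1 hsy hsz
    rcases hx1 with hx | hx
    · have hy : y1 ∈ C2 := by
        rcases hy1 with h | h
        · exact absurd ⟨hx, h⟩ Kxy.1
        · exact h
      have hz : z1 ∈ C2 := by
        rcases hz1 with h | h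
        · exact absurd ⟨hx, h⟩ Kxz.1
        · exact h
      exact Kyz.2 ⟨hy, hz⟩
    · have hy : y1 ∈ C1 := by
        rcases hy1 with h | h
        · exact h
        · exact absurd ⟨hx, h⟩ Kxy.2
      have hz : z1 ∈ C1 := by
        rcases hz1 with h | h
        · exact h
        · exact absurd ⟨hx, h⟩ Kxz.2
      exact Kyz.1 ⟨hy, hz⟩
  · intro x1 x2 y1 y2 hx1 hx2 hy1 hy2 hpw hsx hsy
    simp only [List.pairwise_cons, List.mem_cons, List.mem_singleton,
      List.not_mem_nil, ne_eq,
      forall_eq_or_imp, forall_eq, and_true] at hpw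
    obtain ⟨⟨h12, h13, h14⟩, ⟨h23, h24⟩, h34, -⟩ := hpw
    exact key x1 x2 y1 y2 hx1 hx2 hy1 hy2 h12 h13 h34.1 h24.1 hsx hsy
end

section
/- Let (C₁, C₂) ⊆ {0,1}ⁿ be a 0.5 partially correcting codebook pair with zero error over W⁺_{2,1}, with |C₁|,|C₂| > 1. Then |C₁| + |C₂| ≤ C(n, ⌈n/2⌉) + 2. -/
section Sperner

variable {α : Type*} [DecidableEq α]

def indicatorEmbedding : Finset α ↪o (α → ℕ) :=
  OrderEmbedding.ofMapLEIff (fun s i => if i ∈ s then 1 else 0) fun s t => by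
    refine ⟨fun h i hi => ?_, fun h i => ?_⟩
    · by_contra ht
      simpa [hi, ht] using h i
    · by_cases hs : i ∈ s
      · simp [hs, h hs]
      · simp [hs]

theorem range_indicatorEmbedding [Fintype α] :
    Set.range (indicatorEmbedding (α := α)) = {x | ∀ i, x i ≤ 1} := by
  ext x
  refine ⟨?_, fun hx => ⟨Finset.univ.filter (x · = 1), funext fun i => ?_⟩⟩
  · rintro ⟨s, rfl⟩ i
    by_cases hi : i ∈ s <;> simp [indicatorEmbedding, hi]
  · have := hx i
    by_cases hi : x i = 1
    · simp [indicatorEmbedding, hi]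
    · simp [indicatorEmbedding, hi]
      omega

theorem finite_of_forall_le_one [Finite α] {T : Set (α → ℕ)} (hT : ∀ x ∈ T, ∀ i, x i ≤ 1) :
    T.Finite := by
  have := Fintype.ofFinite α
  refine (Set.finite_range (indicatorEmbedding (α := α))).subset fun x hx => ?_
  rw [range_indicatorEmbedding]
  exact hT x hx

theorem ncard_le_choose_of_isAntichain [Fintype α] {T : Set (α → ℕ)}
    (hbin : ∀ x ∈ T, ∀ i, x i ≤ 1) (hT : IsAntichain (· ≤ ·) T) :
    T.ncard ≤ (Fintype.card α).choose (Fintype.card α / 2) := by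
  classical
  have hsub : T ⊆ Set.range (indicatorEmbedding (α := α)) := by
    rw [range_indicatorEmbedding]
    exact hbin
  have h𝒜 := hT.preimage_embedding indicatorEmbedding
  rw [← Set.ncard_preimage_of_injective_subset_range indicatorEmbedding.injective hsub,
    Set.ncard_eq_toFinset_card']
  exact IsAntichain.sperner (by simpa using h𝒜)

end Sperner

theorem exists_subsingleton_cover_of_eq_or_eq {α : Type*} {r : α → α → Prop}
    (h : ∀ a b c d, r a b → r c d → a = c ∨ b = d) :
    ∃ E : Set α, E.Subsingleton ∧ ∀ a b, r a b → a ∈ E ∨ b ∈ E := by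
  by_cases hdom : {a | ∃ b, r a b}.Subsingleton
  · exact ⟨_, hdom, fun a b hab => Or.inl ⟨b, hab⟩⟩
  refine ⟨{b | ∃ a, r a b}, ?_, fun a b hab => Or.inr ⟨a, hab⟩⟩
  obtain ⟨p, ⟨q, hpq⟩, p', ⟨q', hpq'⟩, hp⟩ := Set.not_subsingleton_iff.mp hdom
  -- two pairs with distinct first entries force every pair to have second entry `q`
  have hq : ∀ a b, r a b → b = q := by
    intro a b hab
    rcases h a b p q hab hpq with rfl | hb
    · rcases h a b p' q' hab hpq' with rfl | rfl
      · exact absurd rfl hp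
      · exact ((h a q p' b hpq hpq').resolve_left hp).symm
    · exact hb
  rintro b ⟨a, hab⟩ b' ⟨a', hab'⟩
  rw [hq a b hab, hq a' b' hab']

theorem exists_le_one_add_eq_of_lt {ι : Type*} {x y : ι → ℕ} (hxy : x < y)
    (hy : ∀ i, y i ≤ 1) : ∃ s : ι → ℕ, (∀ i, s i ≤ 1) ∧ s ≠ 0 ∧ y = s + x :=
  ⟨y - x, fun i => (Nat.sub_le _ _).trans (hy i), fun h => hxy.not_ge (tsub_eq_zero_iff_le.mp h),
    (tsub_add_cancel_of_le hxy.le).symm⟩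

theorem isAntichain_union_sdiff {α : Type*} [PartialOrder α] {C1 C2 E : Set α}
    (hC1 : IsAntichain (· ≤ ·) C1) (hC2 : IsAntichain (· ≤ ·) C2)
    (hE : ∀ a ∈ C1, ∀ b ∈ C2, a < b ∨ b < a → a ∈ E ∨ b ∈ E) :
    IsAntichain (· ≤ ·) ((C1 ∪ C2) \ E) := by
  rw [Set.union_sdiff_distrib, isAntichain_union]
  refine ⟨hC1.subset Set.sdiff_subset, hC2.subset Set.sdiff_subset, ?_⟩
  rintro a ⟨ha, haE⟩ b ⟨hb, hbE⟩ hab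
  have := hE a ha b hb
  exact ⟨fun h => by grind [lt_of_le_of_ne], fun h => by grind [lt_of_le_of_ne]⟩

section Codebooks

variable {n : ℕ} {C1 C2 : Set (Fin n → ℕ)}

theorem A0_comm : A0 n C1 C2 = A0 n C2 C1 := by
  ext u
  constructor <;> rintro ⟨x, hx, y, hy, rfl⟩ <;> exact ⟨y, hy, x, hx, add_comm x y⟩

theorem A1_comm : A1 n C1 C2 = A1 n C2 C1 := by
  ext w
  constructor <;> rintro ⟨x, hx, y, hy, s, hs, hs0, rfl⟩ <;>
    exact ⟨y, hy, x, hx, s, hs, hs0, add_right_comm s x y⟩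

theorem Cond1.symm (h : Cond1 n C1 C2) : Cond1 n C2 C1 := by
  rwa [Cond1, A0_comm, A1_comm]

theorem Cond3.symm (h : Cond3 n C1 C2) : Cond3 n C2 C1 := by
  intro w
  obtain ⟨j, hj⟩ := h w
  refine ⟨j.rev, fun x2 hx2 x1 hx1 x2' hx2' x1' hx1' s s' hs hs0 hs' hs0' hw hw' => ?_⟩
  have := hj x1 hx1 x2 hx2 x1' hx1' x2' hx2' s s' hs hs0 hs' hs0'
    (hw.trans (add_right_comm _ _ _)) (hw'.trans (add_right_comm _ _ _))
  fin_cases j <;> simp_all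

theorem Cond2.ncard_inter_le_one (h : Cond2 n C1 C2) : (C1 ∩ C2).ncard ≤ 1 := by
  have hsub : (C1 ∩ C2).Subsingleton :=
    fun c hc c' hc' => (h c hc.1 c' hc'.1 c' hc'.2 c hc.2 (add_comm c c')).1
  exact (Set.ncard_le_one hsub.finite).2 hsub

theorem add_mem_A1_of_lt {x y z : Fin n → ℕ} (hx : x ∈ C1) (hz : z ∈ C2) (hxy : x < y)
    (hy : ∀ i, y i ≤ 1) : y + z ∈ A1 n C1 C2 := by
  obtain ⟨s, hs, hs0, rfl⟩ := exists_le_one_add_eq_of_lt hxy hy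
  exact ⟨x, hx, z, hz, s, hs, hs0, rfl⟩

theorem Cond1.isAntichain_left (h : Cond1 n C1 C2) (hbin1 : ∀ x ∈ C1, ∀ i, x i ≤ 1)
    (hC2 : C2.Nonempty) : IsAntichain (· ≤ ·) C1 := by
  intro x hx y hy hne hle
  obtain ⟨z, hz⟩ := hC2
  have hmem : y + z ∈ A0 n C1 C2 ∩ A1 n C1 C2 :=
    ⟨⟨y, hy, z, hz, rfl⟩, add_mem_A1_of_lt hx hz (lt_of_le_of_ne hle hne) (hbin1 y hy)⟩
  rwa [h] at hmem

theorem Cond1.not_lt_of_mem_inter (h : Cond1 n C1 C2) {a b c : Fin n → ℕ} (hc : c ∈ C1 ∩ C2)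
    (ha : a ∈ C1) (hb : b ∈ C2) (hbin : ∀ i, b i ≤ 1) : ¬ a < b := by
  intro hab
  have hmem : c + b ∈ A0 n C1 C2 ∩ A1 n C1 C2 :=
    ⟨⟨c, hc.1, b, hb, rfl⟩, add_comm b c ▸ add_mem_A1_of_lt ha hc.2 hab hbin⟩
  rwa [h] at hmem

theorem Cond3.eq_or_eq_of_lt (h : Cond3 n C1 C2) {a b c d : Fin n → ℕ} (ha : a ∈ C1)
    (hb : b ∈ C2) (hc : c ∈ C1) (hd : d ∈ C2) (hab : a < b) (hcd : c < d)
    (hbin_b : ∀ i, b i ≤ 1) (hbin_d : ∀ i, d i ≤ 1) : a = c ∨ b = d := by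
  obtain ⟨s, hs, hs0, rfl⟩ := exists_le_one_add_eq_of_lt hab hbin_b
  obtain ⟨s', hs', hs0', rfl⟩ := exists_le_one_add_eq_of_lt hcd hbin_d
  -- `(s + a) + (s' + c)` is received both from `(a, s' + c)` with noise `s` and from
  -- `(c, s + a)` with noise `s'`
  obtain ⟨j, hj⟩ := h (s + a + (s' + c))
  have := hj a ha (s' + c) hd c hc (s + a) hb s s' hs hs0 hs' hs0' rfl
    (by rw [add_comm, add_assoc])
  fin_cases j <;> simp_all

theorem Cond3.exists_cover (h : Cond3 n C1 C2) (hbin1 : ∀ x ∈ C1, ∀ i, x i ≤ 1)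
    (hbin2 : ∀ x ∈ C2, ∀ i, x i ≤ 1) :
    ∃ E : Set (Fin n → ℕ), E.Finite ∧ E.ncard ≤ 2 ∧
      ∀ a ∈ C1, ∀ b ∈ C2, a < b ∨ b < a → a ∈ E ∨ b ∈ E := by
  obtain ⟨E, hE, hcover⟩ := exists_subsingleton_cover_of_eq_or_eq
    (r := fun a b => a ∈ C1 ∧ b ∈ C2 ∧ a < b) fun a b c d ⟨ha, hb, hab⟩ ⟨hc, hd, hcd⟩ =>
      h.eq_or_eq_of_lt ha hb hc hd hab hcd (hbin2 b hb) (hbin2 d hd)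
  obtain ⟨E', hE', hcover'⟩ := exists_subsingleton_cover_of_eq_or_eq
    (r := fun b a => b ∈ C2 ∧ a ∈ C1 ∧ b < a) fun b a d c ⟨hb, ha, hba⟩ ⟨hd, hc, hdc⟩ =>
      h.symm.eq_or_eq_of_lt hb ha hd hc hba hdc (hbin1 a ha) (hbin1 c hc)
  refine ⟨E ∪ E', hE.finite.union hE'.finite, ?_, ?_⟩
  · calc (E ∪ E').ncard ≤ E.ncard + E'.ncard := Set.ncard_union_le E E'
      _ ≤ 1 + 1 :=
        add_le_add ((Set.ncard_le_one hE.finite).2 hE) ((Set.ncard_le_one hE'.finite).2 hE')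
  · rintro a ha b hb (hab | hba)
    · rcases hcover a b ⟨ha, hb, hab⟩ with h | h <;> simp [h]
    · rcases hcover' b a ⟨hb, ha, hba⟩ with h | h <;> simp [h]

theorem exists_cover_add_ncard_inter_le_two (hbin1 : ∀ x ∈ C1, ∀ i, x i ≤ 1)
    (hbin2 : ∀ x ∈ C2, ∀ i, x i ≤ 1) (h1 : Cond1 n C1 C2) (h2 : Cond2 n C1 C2)
    (h3 : Cond3 n C1 C2) :
    ∃ E : Set (Fin n → ℕ), E.Finite ∧ E.ncard + (C1 ∩ C2).ncard ≤ 2 ∧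
      ∀ a ∈ C1, ∀ b ∈ C2, a < b ∨ b < a → a ∈ E ∨ b ∈ E := by
  rcases (C1 ∩ C2).eq_empty_or_nonempty with hdisj | ⟨c, hc⟩
  · obtain ⟨E, hEfin, hE, hcover⟩ := h3.exists_cover hbin1 hbin2
    exact ⟨E, hEfin, by simpa [hdisj] using hE, hcover⟩
  -- a common codeword rules out strict comparabilities across the codebooks, so `E = ∅` works
  refine ⟨∅, Set.finite_empty, ?_, fun a ha b hb hab => hab.elim ?_ ?_⟩
  · simpa using h2.ncard_inter_le_one.trans one_le_two
  · exact fun hab => (h1.not_lt_of_mem_inter hc ha hb (hbin2 b hb) hab).elim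
  · exact fun hba => (h1.symm.not_lt_of_mem_inter ⟨hc.2, hc.1⟩ hb ha (hbin1 a ha) hba).elim

end Codebooks

/-- A zero-error `0.5` partially correcting codebook pair over `W⁺_{2,1}`
with `|C1|, |C2| > 1` satisfies `|C1| + |C2| ≤ C(n, ⌈n/2⌉) + 2`. -/
theorem stmt_9 (n : ℕ) (C1 C2 : Set (Fin n → ℕ))
    (hbin1 : ∀ x ∈ C1, ∀ i, x i ≤ 1) (hbin2 : ∀ x ∈ C2, ∀ i, x i ≤ 1)
    (h1 : Cond1 n C1 C2) (h2 : Cond2 n C1 C2) (h3 : Cond3 n C1 C2)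
    (hC1 : C1.Nontrivial) (hC2 : C2.Nontrivial) :
    C1.ncard + C2.ncard ≤ Nat.choose n ((n + 1) / 2) + 2 := by
  have hbin : ∀ x ∈ C1 ∪ C2, ∀ i, x i ≤ 1 := by
    rintro x (hx | hx)
    exacts [hbin1 x hx, hbin2 x hx]
  have hfin : (C1 ∪ C2).Finite := finite_of_forall_le_one hbin
  obtain ⟨E, hEfin, hE, hcover⟩ := exists_cover_add_ncard_inter_le_two hbin1 hbin2 h1 h2 h3
  have hanti := isAntichain_union_sdiff (h1.isAntichain_left hbin1 hC2.nonempty)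
    (h1.symm.isAntichain_left hbin2 hC1.nonempty) hcover
  have hsperner := ncard_le_choose_of_isAntichain (fun x hx => hbin x hx.1) hanti
  rw [Fintype.card_fin, Nat.choose_symm_of_eq_add (by omega : n = n / 2 + (n + 1) / 2)] at hsperner
  calc C1.ncard + C2.ncard = (C1 ∪ C2).ncard + (C1 ∩ C2).ncard :=
        (Set.ncard_union_add_ncard_inter _ _ (hfin.subset Set.subset_union_left)
          (hfin.subset Set.subset_union_right)).symm
    _ ≤ ((C1 ∪ C2) \ E).ncard + E.ncard + (C1 ∩ C2).ncard := by
        gcongr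
        exact Set.ncard_le_ncard_sdiff_add_ncard _ _ hEfin
    _ ≤ n.choose ((n + 1) / 2) + 2 := by omega
end
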